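/- Let G be a finite simple graph and k ∈ ℕ. Every T-triangle in B_k(G) is either a cyclic T-triangle or a radial T-triangle. -/

import Mathlib

open SimpleGraph

variable {V : Type*} [Fintype V] [DecidableEq V]

/-- Delete the vertex `v` from its part: `P − v`. -/
def eraseVtx (P : Multiset (Finset V)) (v : V) : Multiset (Finset V) :=
  P.map (fun s => s.erase v)

/-- A stable `k`-partition of `G`: a multiset of exactly `k` independent sets
(empty parts allowed) that are pairwise disjoint and whose union is `V(G)`.
(Pairwise disjointness together with covering is encoded by requiring that the
multiset sum of the parts is exactly the multiset of all vertices.) -/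
def IsStablePartition (G : SimpleGraph V) (k : ℕ) (P : Multiset (Finset V)) : Prop :=
  Multiset.card P = k ∧ (P.map Finset.val).sum = (Finset.univ : Finset V).val ∧
    ∀ s ∈ P, ∀ a ∈ s, ∀ b ∈ s, ¬ G.Adj a b

/-- The Bell `k`-coloring graph of `G`. -/
def bellGraph (G : SimpleGraph V) (k : ℕ) :
    SimpleGraph {P : Multiset (Finset V) // IsStablePartition G k P} where
  Adj P Q := P ≠ Q ∧ ∃ v : V, eraseVtx P.1 v = eraseVtx Q.1 v
  symm := by
    constructor
    rintro P Q ⟨hne, v, hv⟩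
    exact ⟨hne.symm, v, hv.symm⟩
  loopless := by
    constructor
    rintro P ⟨hne, _⟩
    exact hne rfl

/-- A cyclic T-triangle: the three edges are realized by three distinct
vertices `v₁, v₂, v₃` (with `vᵢ` realizing the edge not incident to `Pᵢ`) and
`Pᵢ` contains the singleton `{vᵢ}` as a part. -/
def IsCyclicTTriple (P₁ P₂ P₃ : Multiset (Finset V)) : Prop :=
  ∃ v₁ v₂ v₃ : V, v₁ ≠ v₂ ∧ v₁ ≠ v₃ ∧ v₂ ≠ v₃ ∧
    eraseVtx P₁ v₃ = eraseVtx P₂ v₃ ∧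
    eraseVtx P₂ v₁ = eraseVtx P₃ v₁ ∧
    eraseVtx P₃ v₂ = eraseVtx P₁ v₂ ∧
    ({v₁} : Finset V) ∈ P₁ ∧ ({v₂} : Finset V) ∈ P₂ ∧ ({v₃} : Finset V) ∈ P₃

/-- A radial T-triangle (with distinguished first partition): the three edges
are realized by three distinct vertices `v₁, v₂, v₃` (with `vᵢ` realizing the
edge not incident to `Pᵢ`) and `P₁` contains `{v₁, v₂, v₃}` as a part. -/
def IsRadialTTriple (P₁ P₂ P₃ : Multiset (Finset V)) : Prop :=
  ∃ v₁ v₂ v₃ : V, v₁ ≠ v₂ ∧ v₁ ≠ v₃ ∧ v₂ ≠ v₃ ∧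
    eraseVtx P₁ v₃ = eraseVtx P₂ v₃ ∧
    eraseVtx P₂ v₁ = eraseVtx P₃ v₁ ∧
    eraseVtx P₃ v₂ = eraseVtx P₁ v₂ ∧
    ({v₁, v₂, v₃} : Finset V) ∈ P₁

/-!
Only the realizing vertices `v₁, v₂, v₃` change parts, and no other vertex `w` shares a part with
any `vᵢ`: it would follow `vᵢ` around the triangle and end up with `vᵢ` on both sides of the move
of `vᵢ`. So the triangle lives on the partitions of `{v₁, v₂, v₃}`. Moving `v₃` keeps `v₁, v₂`
together or apart and must change the companions of `v₃`; hence if `v₁, v₂` share a part of `P₁`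
(and so of `P₂`), `v₃` lies in that part in `P₁` or in `P₂`. Thus unless some `Pᵢ` contains the
part `{v₁, v₂, v₃}`, every `vᵢ` is a singleton part of `Pᵢ`.
-/

section

variable {α : Type*}

def SamePart (P : Multiset (Finset α)) (a b : α) : Prop :=
  ∃ s ∈ P, a ∈ s ∧ b ∈ s

variable [DecidableEq α]

def IsPartition (P : Multiset (Finset α)) : Prop :=
  ∀ v, ((P.map Finset.val).sum).count v = 1

theorem IsStablePartition.isPartition [Fintype α] {G : SimpleGraph α} {k : ℕ}
    {P : Multiset (Finset α)} (hP : IsStablePartition G k P) : IsPartition P := fun v => by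
  rw [hP.2.1]
  exact Multiset.count_eq_one_of_mem Finset.univ.nodup (Finset.mem_univ_val v)

theorem exists_erase_eq_of_eraseVtx_eq {P Q : Multiset (Finset α)} {s : Finset α} {v : α}
    (he : eraseVtx P v = eraseVtx Q v) (hs : s ∈ P) : ∃ t ∈ Q, t.erase v = s.erase v := by
  have : s.erase v ∈ eraseVtx Q v := he ▸ Multiset.mem_map_of_mem _ hs
  exact Multiset.mem_map.mp this

theorem mem_of_erase_eq {s t : Finset α} {v x : α} (hst : s.erase v = t.erase v) (hx : x ≠ v)
    (hxs : x ∈ s) : x ∈ t := by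
  have hx' := Finset.mem_erase_of_ne_of_mem hx hxs
  rw [hst] at hx'
  exact Finset.mem_of_mem_erase hx'

theorem SamePart.of_eraseVtx_eq {P Q : Multiset (Finset α)} {v a b : α}
    (he : eraseVtx P v = eraseVtx Q v) (ha : a ≠ v) (hb : b ≠ v) (h : SamePart P a b) :
    SamePart Q a b := by
  obtain ⟨s, hs, has, hbs⟩ := h
  obtain ⟨t, ht, hts⟩ := exists_erase_eq_of_eraseVtx_eq he hs
  exact ⟨t, ht, mem_of_erase_eq hts.symm ha has, mem_of_erase_eq hts.symm hb hbs⟩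

namespace IsPartition

variable {P Q : Multiset (Finset α)} {s t : Finset α} {v : α}

theorem exists_mem (hP : IsPartition P) (v : α) : ∃ s ∈ P, v ∈ s := by
  have hv : v ∈ (P.map Finset.val).sum := Multiset.count_pos.mp (by rw [hP v]; exact one_pos)
  obtain ⟨_, hm, hvm⟩ := Multiset.mem_join.mp hv
  obtain ⟨s, hs, rfl⟩ := Multiset.mem_map.mp hm
  exact ⟨s, hs, hvm⟩

theorem notMem_of_mem_erase (hP : IsPartition P) (hs : s ∈ P) (hv : v ∈ s)
    (ht : t ∈ P.erase s) : v ∉ t := by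
  have hc := hP v
  rw [← Multiset.cons_erase hs, Multiset.map_cons, Multiset.sum_cons, Multiset.count_add,
    Multiset.count_eq_one_of_mem s.nodup hv, add_eq_left, Multiset.count_eq_zero] at hc
  exact fun hvt => hc (Multiset.mem_join.mpr ⟨t.val, Multiset.mem_map_of_mem _ ht, hvt⟩)

theorem eq_of_mem (hP : IsPartition P) (hs : s ∈ P) (ht : t ∈ P) (hvs : v ∈ s) (hvt : v ∈ t) :
    s = t := by
  by_contra hne
  exact hP.notMem_of_mem_erase hs hvs ((Multiset.mem_erase_of_ne (Ne.symm hne)).2 ht) hvt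

theorem eraseVtx_eq_cons (hP : IsPartition P) (hs : s ∈ P) (hv : v ∈ s) :
    eraseVtx P v = s.erase v ::ₘ P.erase s := by
  conv_lhs => rw [eraseVtx, ← Multiset.cons_erase hs, Multiset.map_cons]
  congr 1
  exact (Multiset.map_congr rfl fun t ht => Finset.erase_eq_of_notMem
    (hP.notMem_of_mem_erase hs hv ht)).trans (Multiset.map_id _)

theorem eq_of_eraseVtx_eq (hP : IsPartition P) (hQ : IsPartition Q)
    (he : eraseVtx P v = eraseVtx Q v) (hs : s ∈ P) (hvs : v ∈ s) (ht : t ∈ Q) (hvt : v ∈ t)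
    (hst : s.erase v = t.erase v) : P = Q := by
  rw [hP.eraseVtx_eq_cons hs hvs, hQ.eraseVtx_eq_cons ht hvt, hst,
    Multiset.cons_inj_right] at he
  have : s = t := by rw [← Finset.insert_erase hvs, ← Finset.insert_erase hvt, hst]
  rw [← Multiset.cons_erase hs, ← Multiset.cons_erase ht, he, this]

theorem not_samePart_of_eraseVtx_eq (hP : IsPartition P) (hQ : IsPartition Q) (hne : P ≠ Q)
    (he : eraseVtx P v = eraseVtx Q v) {w : α} (hw : w ≠ v) (hPw : SamePart P v w) :
    ¬ SamePart Q v w := by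
  rintro ⟨t, ht, hvt, hwt⟩
  obtain ⟨s, hs, hvs, hws⟩ := hPw
  obtain ⟨t', ht', hst'⟩ := exists_erase_eq_of_eraseVtx_eq he hs
  rw [hQ.eq_of_mem ht' ht (mem_of_erase_eq hst'.symm hw hws) hwt] at hst'
  exact hne (hP.eq_of_eraseVtx_eq hQ he hs hvs ht hvt hst'.symm)

theorem exists_samePart_of_eraseVtx_eq (hP : IsPartition P) (hQ : IsPartition Q) (hne : P ≠ Q)
    (he : eraseVtx P v = eraseVtx Q v) : ∃ w ≠ v, SamePart P v w ∨ SamePart Q v w := by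
  obtain ⟨s, hs, hvs⟩ := hP.exists_mem v
  obtain ⟨t, ht, hvt⟩ := hQ.exists_mem v
  by_contra! hno
  refine hne (hP.eq_of_eraseVtx_eq hQ he hs hvs ht hvt ?_)
  ext w
  simp only [Finset.mem_erase]
  exact ⟨fun ⟨hw, hws⟩ => absurd ⟨s, hs, hvs, hws⟩ (hno w hw).1,
    fun ⟨hw, hwt⟩ => absurd ⟨t, ht, hvt, hwt⟩ (hno w hw).2⟩

theorem exists_mem_of_samePart (hP : IsPartition P) {a b c w : α} (hab : SamePart P a b)
    (hcw : SamePart P c w) (hw : w = a ∨ w = b) : ∃ s ∈ P, a ∈ s ∧ b ∈ s ∧ c ∈ s := by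
  obtain ⟨s, hs, has, hbs⟩ := hab
  obtain ⟨t, ht, hct, hwt⟩ := hcw
  have hts : t = s := by
    rcases hw with rfl | rfl
    exacts [hP.eq_of_mem ht hs hwt has, hP.eq_of_mem ht hs hwt hbs]
  exact ⟨s, hs, has, hbs, hts ▸ hct⟩

end IsPartition

theorem triple_rotate (a b c : α) : ({b, c, a} : Finset α) = {a, b, c} := by
  ext x
  simp only [Finset.mem_insert, Finset.mem_singleton]
  tauto

theorem triple_swap (a b c : α) : ({a, c, b} : Finset α) = {a, b, c} := by
  rw [Finset.pair_comm]

structure IsMoveTriangle (P₁ P₂ P₃ : Multiset (Finset α)) (v₁ v₂ v₃ : α) : Prop where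
  isPartition₁ : IsPartition P₁
  isPartition₂ : IsPartition P₂
  isPartition₃ : IsPartition P₃
  P₁_ne_P₂ : P₁ ≠ P₂
  P₂_ne_P₃ : P₂ ≠ P₃
  P₃_ne_P₁ : P₃ ≠ P₁
  erase₁₂ : eraseVtx P₁ v₃ = eraseVtx P₂ v₃
  erase₂₃ : eraseVtx P₂ v₁ = eraseVtx P₃ v₁
  erase₃₁ : eraseVtx P₃ v₂ = eraseVtx P₁ v₂
  v₁_ne_v₂ : v₁ ≠ v₂
  v₁_ne_v₃ : v₁ ≠ v₃
  v₂_ne_v₃ : v₂ ≠ v₃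

namespace IsMoveTriangle

variable {P₁ P₂ P₃ : Multiset (Finset α)} {v₁ v₂ v₃ : α}

theorem rotate (h : IsMoveTriangle P₁ P₂ P₃ v₁ v₂ v₃) : IsMoveTriangle P₂ P₃ P₁ v₂ v₃ v₁ where
  isPartition₁ := h.isPartition₂
  isPartition₂ := h.isPartition₃
  isPartition₃ := h.isPartition₁
  P₁_ne_P₂ := h.P₂_ne_P₃
  P₂_ne_P₃ := h.P₃_ne_P₁
  P₃_ne_P₁ := h.P₁_ne_P₂
  erase₁₂ := h.erase₂₃
  erase₂₃ := h.erase₃₁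
  erase₃₁ := h.erase₁₂
  v₁_ne_v₂ := h.v₂_ne_v₃
  v₁_ne_v₃ := h.v₁_ne_v₂.symm
  v₂_ne_v₃ := h.v₁_ne_v₃.symm

theorem reflect (h : IsMoveTriangle P₁ P₂ P₃ v₁ v₂ v₃) : IsMoveTriangle P₁ P₃ P₂ v₁ v₃ v₂ where
  isPartition₁ := h.isPartition₁
  isPartition₂ := h.isPartition₃
  isPartition₃ := h.isPartition₂
  P₁_ne_P₂ := h.P₃_ne_P₁.symm
  P₂_ne_P₃ := h.P₂_ne_P₃.symm
  P₃_ne_P₁ := h.P₁_ne_P₂.symm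
  erase₁₂ := h.erase₃₁.symm
  erase₂₃ := h.erase₂₃.symm
  erase₃₁ := h.erase₁₂.symm
  v₁_ne_v₂ := h.v₁_ne_v₃
  v₁_ne_v₃ := h.v₁_ne_v₂
  v₂_ne_v₃ := h.v₂_ne_v₃.symm

theorem not_samePart_third (h : IsMoveTriangle P₁ P₂ P₃ v₁ v₂ v₃) {w : α} (hw₁ : w ≠ v₁)
    (hw₂ : w ≠ v₂) (hw₃ : w ≠ v₃) : ¬ SamePart P₁ v₃ w := fun h₁ =>
  have h₃ : SamePart P₃ v₃ w := h₁.of_eraseVtx_eq h.erase₃₁.symm h.v₂_ne_v₃.symm hw₂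
  have h₂ : SamePart P₂ v₃ w := h₃.of_eraseVtx_eq h.erase₂₃.symm h.v₁_ne_v₃.symm hw₁
  h.isPartition₁.not_samePart_of_eraseVtx_eq h.isPartition₂ h.P₁_ne_P₂ h.erase₁₂ hw₃ h₁ h₂

theorem mem_triple_of_samePart (h : IsMoveTriangle P₁ P₂ P₃ v₁ v₂ v₃) {u w : α}
    (hu : u ∈ ({v₁, v₂, v₃} : Finset α)) (huw : SamePart P₁ u w) :
    w ∈ ({v₁, v₂, v₃} : Finset α) := by
  by_contra hw
  simp only [Finset.mem_insert, Finset.mem_singleton, not_or] at hu hw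
  obtain ⟨hw₁, hw₂, hw₃⟩ := hw
  rcases hu with rfl | rfl | rfl
  · exact h.rotate.not_samePart_third hw₂ hw₃ hw₁ (huw.of_eraseVtx_eq h.erase₁₂ h.v₁_ne_v₃ hw₃)
  · exact h.reflect.not_samePart_third hw₁ hw₃ hw₂ huw
  · exact h.not_samePart_third hw₁ hw₂ hw₃ huw

theorem eq_triple_of_mem (h : IsMoveTriangle P₁ P₂ P₃ v₁ v₂ v₃) {s : Finset α} (hs : s ∈ P₁)
    (h₁ : v₁ ∈ s) (h₂ : v₂ ∈ s) (h₃ : v₃ ∈ s) : s = {v₁, v₂, v₃} := by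
  refine subset_antisymm (fun w hw => ?_) (by simp [Finset.insert_subset_iff, h₁, h₂, h₃])
  exact h.mem_triple_of_samePart (by simp) ⟨s, hs, h₁, hw⟩

theorem triple_mem_of_samePart (h : IsMoveTriangle P₁ P₂ P₃ v₁ v₂ v₃)
    (h₁₂ : SamePart P₁ v₁ v₂) : {v₁, v₂, v₃} ∈ P₁ ∨ {v₁, v₂, v₃} ∈ P₂ := by
  have h₁₂' : SamePart P₂ v₁ v₂ := h₁₂.of_eraseVtx_eq h.erase₁₂ h.v₁_ne_v₃ h.v₂_ne_v₃
  obtain ⟨w, hw₃, hw⟩ := h.isPartition₁.exists_samePart_of_eraseVtx_eq h.isPartition₂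
    h.P₁_ne_P₂ h.erase₁₂
  rcases hw with hw | hw
  · have hw' := h.mem_triple_of_samePart (by simp) hw
    simp only [Finset.mem_insert, Finset.mem_singleton, hw₃, or_false] at hw'
    obtain ⟨s, hs, h₁, h₂, h₃⟩ := h.isPartition₁.exists_mem_of_samePart h₁₂ hw hw'
    exact Or.inl (h.eq_triple_of_mem hs h₁ h₂ h₃ ▸ hs)
  · have hw' := h.rotate.mem_triple_of_samePart (by simp) hw
    simp only [Finset.mem_insert, Finset.mem_singleton, hw₃, false_or] at hw'
    obtain ⟨s, hs, h₁, h₂, h₃⟩ := h.isPartition₂.exists_mem_of_samePart h₁₂' hw hw'.symm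
    have := h.rotate.eq_triple_of_mem hs h₂ h₃ h₁
    rw [triple_rotate] at this
    exact Or.inr (this ▸ hs)

theorem singleton_mem_or_triple_mem (h : IsMoveTriangle P₁ P₂ P₃ v₁ v₂ v₃) :
    {v₁} ∈ P₁ ∨ {v₁, v₂, v₃} ∈ P₁ ∨ {v₁, v₂, v₃} ∈ P₂ ∨ {v₁, v₂, v₃} ∈ P₃ := by
  obtain ⟨s, hs, hv₁⟩ := h.isPartition₁.exists_mem v₁
  by_contra! hno
  obtain ⟨hsingle, hT₁, hT₂, hT₃⟩ := hno
  refine hsingle (Finset.eq_singleton_iff_unique_mem.mpr ⟨hv₁, fun w hw => ?_⟩ ▸ hs)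
  have hsame : SamePart P₁ v₁ w := ⟨s, hs, hv₁, hw⟩
  have hw' := h.mem_triple_of_samePart (by simp) hsame
  simp only [Finset.mem_insert, Finset.mem_singleton] at hw'
  rcases hw' with rfl | rfl | rfl
  · rfl
  · exact (h.triple_mem_of_samePart hsame).elim (absurd · hT₁) (absurd · hT₂)
  · have := h.reflect.triple_mem_of_samePart hsame
    rw [triple_swap] at this
    exact this.elim (absurd · hT₁) (absurd · hT₃)

theorem singletons_mem_or_triple_mem (h : IsMoveTriangle P₁ P₂ P₃ v₁ v₂ v₃) :
    ({v₁} ∈ P₁ ∧ {v₂} ∈ P₂ ∧ {v₃} ∈ P₃) ∨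
      {v₁, v₂, v₃} ∈ P₁ ∨ {v₁, v₂, v₃} ∈ P₂ ∨ {v₁, v₂, v₃} ∈ P₃ := by
  have h₁ := h.singleton_mem_or_triple_mem
  have h₂ := h.rotate.singleton_mem_or_triple_mem
  have h₃ := h.rotate.rotate.singleton_mem_or_triple_mem
  rw [triple_rotate] at h₂
  rw [triple_rotate, triple_rotate] at h₃
  tauto

theorem isCyclicTTriple (h : IsMoveTriangle P₁ P₂ P₃ v₁ v₂ v₃) (h₁ : {v₁} ∈ P₁)
    (h₂ : {v₂} ∈ P₂) (h₃ : {v₃} ∈ P₃) : IsCyclicTTriple P₁ P₂ P₃ :=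
  ⟨v₁, v₂, v₃, h.v₁_ne_v₂, h.v₁_ne_v₃, h.v₂_ne_v₃, h.erase₁₂, h.erase₂₃, h.erase₃₁, h₁, h₂, h₃⟩

theorem isRadialTTriple (h : IsMoveTriangle P₁ P₂ P₃ v₁ v₂ v₃) (hT : {v₁, v₂, v₃} ∈ P₁) :
    IsRadialTTriple P₁ P₂ P₃ :=
  ⟨v₁, v₂, v₃, h.v₁_ne_v₂, h.v₁_ne_v₃, h.v₂_ne_v₃, h.erase₁₂, h.erase₂₃, h.erase₃₁, hT⟩

end IsMoveTriangle

end

/-- **Every T-triangle is cyclic or radial.**  If `{P₁, P₂, P₃}` is a triangle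
in `B_k(G)` with no common anchor (a T-triangle), then it is a cyclic
T-triangle or a radial T-triangle (with some labeling of the distinguished
partition). -/
theorem TTriangle_cyclic_or_radial (G : SimpleGraph V) (k : ℕ)
    (P₁ P₂ P₃ : {P : Multiset (Finset V) // IsStablePartition G k P})
    (h12 : (bellGraph G k).Adj P₁ P₂) (h23 : (bellGraph G k).Adj P₂ P₃)
    (h31 : (bellGraph G k).Adj P₃ P₁)
    (hT : ¬ ∃ u : V, eraseVtx P₁.1 u = eraseVtx P₂.1 u ∧
        eraseVtx P₂.1 u = eraseVtx P₃.1 u ∧ eraseVtx P₃.1 u = eraseVtx P₁.1 u) :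
    IsCyclicTTriple P₁.1 P₂.1 P₃.1 ∨
      IsRadialTTriple P₁.1 P₂.1 P₃.1 ∨ IsRadialTTriple P₂.1 P₃.1 P₁.1 ∨
      IsRadialTTriple P₃.1 P₁.1 P₂.1 := by
  obtain ⟨hne₁₂, v₃, e₁₂⟩ := h12
  obtain ⟨hne₂₃, v₁, e₂₃⟩ := h23
  obtain ⟨hne₃₁, v₂, e₃₁⟩ := h31
  have h : IsMoveTriangle P₁.1 P₂.1 P₃.1 v₁ v₂ v₃ :=
    { isPartition₁ := P₁.2.isPartition
      isPartition₂ := P₂.2.isPartition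
      isPartition₃ := P₃.2.isPartition
      P₁_ne_P₂ := Subtype.coe_injective.ne hne₁₂
      P₂_ne_P₃ := Subtype.coe_injective.ne hne₂₃
      P₃_ne_P₁ := Subtype.coe_injective.ne hne₃₁
      erase₁₂ := e₁₂
      erase₂₃ := e₂₃
      erase₃₁ := e₃₁
      v₁_ne_v₂ := by rintro rfl; exact hT ⟨v₁, e₃₁.symm.trans e₂₃.symm, e₂₃, e₃₁⟩
      v₁_ne_v₃ := by rintro rfl; exact hT ⟨v₁, e₁₂, e₂₃, (e₁₂.trans e₂₃).symm⟩
      v₂_ne_v₃ := by rintro rfl; exact hT ⟨v₂, e₁₂, (e₃₁.trans e₁₂).symm, e₃₁⟩ }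
  rcases h.singletons_mem_or_triple_mem with ⟨h₁, h₂, h₃⟩ | hR₁ | hR₂ | hR₃
  · exact Or.inl (h.isCyclicTTriple h₁ h₂ h₃)
  · exact Or.inr (Or.inl (h.isRadialTTriple hR₁))
  · exact Or.inr (Or.inr (Or.inl (h.rotate.isRadialTTriple (by rwa [triple_rotate]))))
  · exact Or.inr (Or.inr (Or.inr
      (h.rotate.rotate.isRadialTTriple (by rwa [triple_rotate, triple_rotate]))))
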